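/- A function g : F_2^n → F_2 is c-bent₄ if and only if for every nonzero z ∈ F_2^n the Boolean function x ↦ g(x) + g(x+z) + c·(z⊙x) is balanced, i.e., takes each of the values 0 and 1 exactly 2^{n−1} times. -/

import Mathlib

open Finset

noncomputable section

/-- Dot product on `F_2^n`. -/
def dotp {n : ℕ} (x y : Fin n → ZMod 2) : ZMod 2 := ∑ i, x i * y i

/-- Coordinatewise product on `F_2^n`. -/
def odot {n : ℕ} (x y : Fin n → ZMod 2) : Fin n → ZMod 2 := fun i => x i * y i

/-- Hamming weight of `z ∈ F_2^n`. -/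
def wt {n : ℕ} (z : Fin n → ZMod 2) : ℕ := ∑ i, (z i).val

/-- The unitary transform `U_g^c(u) = Σ_x (−1)^{g(x)+u·x} · i^{wt(c⊙x)}`. -/
def U {n : ℕ} (g : (Fin n → ZMod 2) → ZMod 2) (c u : Fin n → ZMod 2) : ℂ :=
  ∑ x : Fin n → ZMod 2, (-1 : ℂ) ^ (g x + dotp u x).val * Complex.I ^ wt (odot c x)

/-- `g` is `c`-bent₄ if `U_g^c` has a flat spectrum. -/
def IsCBent4 {n : ℕ} (g : (Fin n → ZMod 2) → ZMod 2) (c : Fin n → ZMod 2) : Prop :=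
  ∀ u : Fin n → ZMod 2, ‖U g c u‖ = (2 : ℝ) ^ ((n : ℝ) / 2)

/-! Expanding `U_g^c(u) · conj (U_g^c(u))` and substituting `y = x + z` turns it into the Walsh
transform at `u` of `z ↦ (-i)^{wt(c⊙z)} A(z)`, where `A(z) = Σ_x (-1)^{g(x)+g(x+z)+c·(z⊙x)}`:
coordinatewise, `i^{c_i x_i} (-i)^{c_i (x_i+z_i)} = (-i)^{c_i z_i} (-1)^{c_i z_i x_i}`.
Since `A(0) = 2^n`, Walsh inversion shows that `|U_g^c(u)|² = 2^n` for all `u` exactly when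
`A(z) = 0` for every `z ≠ 0`, i.e. when each `x ↦ g(x) + g(x+z) + c·(z⊙x)` is balanced. -/

namespace CBent4

open Complex ComplexConjugate Matrix

lemma _root_.AddChar.map_sum_eq_prod {ι A M : Type*} [AddCommMonoid A] [CommMonoid M]
    (ψ : AddChar A M) (s : Finset ι) (f : ι → A) : ψ (∑ i ∈ s, f i) = ∏ i ∈ s, ψ (f i) :=
  map_prod ψ.toMonoidHom (fun i => Multiplicative.ofAdd (f i)) s

def signChar : AddChar (ZMod 2) ℂ where
  toFun a := (-1) ^ a.val
  map_zero_eq_one' := pow_zero _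
  map_add_eq_mul' a b := by rw [ZMod.val_add, ← neg_one_pow_eq_pow_mod_two, pow_add]

lemma signChar_apply (a : ZMod 2) : signChar a = (-1) ^ a.val := rfl

lemma conj_signChar (a : ZMod 2) : conj (signChar a) = signChar a := by
  simp [signChar_apply]

lemma eq_zero_or_eq_one (a : ZMod 2) : a = 0 ∨ a = 1 := by
  revert a
  decide

lemma univ_zmod_two : (univ : Finset (ZMod 2)) = {0, 1} := rfl

lemma sum_signChar_eq_zero_iff {α : Type*} [Fintype α] (f : α → ZMod 2) :
    ∑ x, signChar (f x) = 0 ↔ ∀ b, 2 * #{x | f x = b} = Fintype.card α := by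
  have hsum : ∑ x, signChar (f x) = #{x | f x = 0} - #{x | f x = 1} := by
    rw [← Finset.sum_fiberwise' univ f signChar, univ_zmod_two, sum_pair zero_ne_one]
    simp [signChar_apply, sub_eq_add_neg, ZMod.val_one]
  have hcard : #{x | f x = 0} + #{x | f x = 1} = Fintype.card α := by
    have := card_eq_sum_card_fiberwise (s := univ) (t := univ) fun x _ => mem_univ (f x)
    rw [univ_zmod_two, sum_pair zero_ne_one, card_univ] at this
    exact this.symm
  rw [hsum, sub_eq_zero, Nat.cast_inj]
  refine ⟨fun h b => ?_, fun h => by have := h 0; omega⟩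
  rcases eq_zero_or_eq_one b with rfl | rfl <;> omega

lemma I_pow_val_mul_negI_pow_val (a b d : ZMod 2) :
    I ^ (a * b).val * (-I) ^ (a * (b + d)).val = (-I) ^ (a * d).val * signChar (a * (d * b)) := by
  rcases eq_zero_or_eq_one a with rfl | rfl <;> rcases eq_zero_or_eq_one b with rfl | rfl <;>
    rcases eq_zero_or_eq_one d with rfl | rfl <;>
    norm_num [signChar_apply, ZMod.val_one, show (1 + 1 : ZMod 2) = 0 from rfl,
      show ZMod.val (2 : ZMod 2) = 0 from rfl]

lemma norm_eq_two_rpow_half_iff (w : ℂ) (n : ℕ) :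
    ‖w‖ = (2 : ℝ) ^ ((n : ℝ) / 2) ↔ w * conj w = 2 ^ n := by
  have hsq : ((2 : ℝ) ^ ((n : ℝ) / 2)) ^ 2 = 2 ^ n := by
    rw [← Real.rpow_natCast, ← Real.rpow_mul zero_le_two]
    norm_num
  rw [mul_conj, normSq_eq_norm_sq, ← pow_left_inj₀ (norm_nonneg w) (by positivity) two_ne_zero,
    hsq]
  norm_cast

variable {n : ℕ}

lemma dotp_comm (x y : Fin n → ZMod 2) : dotp x y = dotp y x := dotProduct_comm x y

lemma dotp_add_right (u x y : Fin n → ZMod 2) : dotp u (x + y) = dotp u x + dotp u y :=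
  dotProduct_add u x y

def walsh (F : (Fin n → ZMod 2) → ℂ) (u : Fin n → ZMod 2) : ℂ :=
  ∑ w, signChar (dotp u w) * F w

lemma sum_signChar_dotp (w : Fin n → ZMod 2) :
    ∑ u, signChar (dotp u w) = if w = 0 then 2 ^ n else 0 := by
  let ψ : AddChar (Fin n → ZMod 2) ℂ :=
    signChar.compAddMonoidHom (AddMonoidHom.mk' (· ⬝ᵥ w) fun u v => add_dotProduct u v w)
  have hψ : ψ = 0 ↔ w = 0 := by
    refine ⟨fun h => ?_, fun h => by subst h; ext u; simp [ψ]⟩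
    by_contra hw
    obtain ⟨i, hi⟩ := Function.ne_iff.mp hw
    have hi1 : w i = 1 := (eq_zero_or_eq_one (w i)).resolve_left hi
    have := DFunLike.congr_fun h (Pi.single i 1)
    norm_num [ψ, single_dotProduct, hi1, signChar_apply, ZMod.val_one] at this
  classical
  refine (AddChar.sum_eq_ite ψ).trans ?_
  rw [if_congr hψ rfl rfl]
  simp [ZMod.card]

lemma walsh_walsh (F : (Fin n → ZMod 2) → ℂ) (z : Fin n → ZMod 2) :
    walsh (walsh F) z = 2 ^ n * F z := by
  have hshift : ∀ w, ∑ u, signChar (dotp z u) * (signChar (dotp u w) * F w)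
      = (∑ u, signChar (dotp u (z + w))) * F w := fun w => by
    rw [sum_mul]
    refine sum_congr rfl fun u _ => ?_
    rw [dotp_comm z u, dotp_add_right, AddChar.map_add_eq_mul, mul_assoc]
  have hcancel : ∀ w : Fin n → ZMod 2, z + w = 0 ↔ w = z := fun w => by
    rw [add_eq_zero_iff_eq_neg', show -z = z from funext fun i => ZMod.neg_eq_self_mod_two (z i)]
  simp only [walsh, mul_sum]
  rw [sum_comm]
  simp only [hshift, sum_signChar_dotp, hcancel, ite_mul, zero_mul, Fintype.sum_ite_eq']

lemma walsh_const (K : ℂ) (z : Fin n → ZMod 2) :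
    walsh (fun _ => K) z = if z = 0 then 2 ^ n * K else 0 := by
  simp only [walsh, ← sum_mul, dotp_comm z, sum_signChar_dotp, ite_mul, zero_mul]

lemma walsh_eq_const_iff (F : (Fin n → ZMod 2) → ℂ) (K : ℂ) :
    (∀ u, walsh F u = K) ↔ ∀ w, F w = if w = 0 then K else 0 := by
  refine ⟨fun h w => ?_, fun h u => by simp [walsh, h, dotp]⟩
  have hinv := walsh_walsh F w
  rw [show walsh F = fun _ => K from funext h, walsh_const] at hinv
  have h2n : (2 : ℂ) ^ n ≠ 0 := pow_ne_zero n two_ne_zero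
  split_ifs at hinv ⊢ <;> [exact (mul_left_cancel₀ h2n hinv).symm;
    exact (mul_eq_zero.mp hinv.symm).resolve_left h2n]

lemma I_pow_wt_mul_negI_pow_wt (c x z : Fin n → ZMod 2) :
    I ^ wt (odot c x) * (-I) ^ wt (odot c (x + z))
      = (-I) ^ wt (odot c z) * signChar (dotp c (odot z x)) := by
  simp only [wt, odot, dotp, Pi.add_apply, ← prod_pow_eq_pow_sum, ← prod_mul_distrib,
    AddChar.map_sum_eq_prod]
  exact prod_congr rfl fun i _ => I_pow_val_mul_negI_pow_val (c i) (x i) (z i)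

def autocorr (g : (Fin n → ZMod 2) → ZMod 2) (c z : Fin n → ZMod 2) : ℂ :=
  ∑ x, signChar (g x + g (x + z) + dotp c (odot z x))

lemma autocorr_zero (g : (Fin n → ZMod 2) → ZMod 2) (c : Fin n → ZMod 2) :
    autocorr g c 0 = 2 ^ n := by
  simp [autocorr, odot, dotp, CharTwo.add_self_eq_zero, ZMod.card]

lemma U_term_mul_conj_U_term_add (g : (Fin n → ZMod 2) → ZMod 2) (c u x z : Fin n → ZMod 2) :
    signChar (g x + dotp u x) * I ^ wt (odot c x) *
        (signChar (g (x + z) + dotp u (x + z)) * (-I) ^ wt (odot c (x + z)))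
      = signChar (dotp u z) * (-I) ^ wt (odot c z) *
        signChar (g x + g (x + z) + dotp c (odot z x)) := by
  have hsum : g x + dotp u x + (g (x + z) + dotp u (x + z)) = dotp u z + (g x + g (x + z)) := by
    rw [dotp_add_right]
    linear_combination dotp u x * CharTwo.two_eq_zero (R := ZMod 2)
  calc _ = signChar (g x + dotp u x + (g (x + z) + dotp u (x + z))) *
        (I ^ wt (odot c x) * (-I) ^ wt (odot c (x + z))) := by
        rw [AddChar.map_add_eq_mul signChar (g x + dotp u x)]; ring
    _ = _ := by
        rw [hsum, I_pow_wt_mul_negI_pow_wt]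
        simp only [AddChar.map_add_eq_mul]
        ring

lemma U_mul_conj (g : (Fin n → ZMod 2) → ZMod 2) (c u : Fin n → ZMod 2) :
    U g c u * conj (U g c u) = walsh (fun z => (-I) ^ wt (odot c z) * autocorr g c z) u := by
  have hconj : conj (U g c u) = ∑ y, signChar (g y + dotp u y) * (-I) ^ wt (odot c y) := by
    simp [U, map_sum, conj_signChar, ← signChar_apply]
  rw [hconj, U, sum_mul_sum, walsh]
  simp only [← signChar_apply, autocorr, mul_sum]
  refine (sum_congr rfl fun x _ => ?_).trans sum_comm
  refine (Fintype.sum_equiv (Equiv.addLeft x) _ _ fun z => ?_).symm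
  rw [Equiv.coe_addLeft, U_term_mul_conj_U_term_add, mul_assoc]

end CBent4

open CBent4 Complex

/-- `g` is `c`-bent₄ iff for every nonzero `z` the function
`x ↦ g(x) + g(x+z) + c·(z⊙x)` is balanced. -/
theorem cBent4_iff_balanced {n : ℕ} (g : (Fin n → ZMod 2) → ZMod 2)
    (c : Fin n → ZMod 2) :
    IsCBent4 g c ↔
      ∀ z : Fin n → ZMod 2, z ≠ 0 → ∀ b : ZMod 2,
        (Finset.univ.filter
          (fun x : Fin n → ZMod 2 => g x + g (x + z) + dotp c (odot z x) = b)).card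
          = 2 ^ (n - 1) := by
  calc IsCBent4 g c
      ↔ ∀ u, walsh (fun z => (-I) ^ wt (odot c z) * autocorr g c z) u = 2 ^ n :=
        forall_congr' fun u => by rw [norm_eq_two_rpow_half_iff, U_mul_conj]
    _ ↔ ∀ z, (-I) ^ wt (odot c z) * autocorr g c z = if z = 0 then 2 ^ n else 0 :=
        walsh_eq_const_iff _ _
    _ ↔ ∀ z ≠ 0, autocorr g c z = 0 := forall_congr' fun z => by
        split_ifs with hz
        · simp [hz, autocorr_zero, odot, wt]
        · simp [hz, I_ne_zero]
    _ ↔ _ := forall₂_congr fun z hz => by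
        have hn : n ≠ 0 := by
          rintro rfl
          exact hz (Subsingleton.elim _ _)
        obtain ⟨m, rfl⟩ := Nat.exists_eq_succ_of_ne_zero hn
        simp [autocorr, sum_signChar_eq_zero_iff, ZMod.card, pow_succ']
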